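/- Let v : ℝ × ℝ → ℝ be smooth and define u = ∂_x v − v² (the Miura transformation). Then the KdV expression factors through the mKdV expression: ∂_t u + 6 u ∂_x u + ∂_x³ u = (−2v + ∂_x)( ∂_t v − 6 v² ∂_x v + ∂_x³ v ), i.e. u_t + 6uu_x + u_{xxx} = (v_t − 6v²v_x + v_{xxx})_x − 2v·(v_t − 6v²v_x + v_{xxx}). In particular, if v solves the mKdV equation v_t − 6v²v_x + v_{xxx} = 0, then u = v_x − v² solves the KdV equation u_t + 6uu_x + u_{xxx} = 0. -/

import Mathlib

/-!
Commuting `∂ₜ∂ₓ`, one gets `uₜ = vₓₜ - 2vvₜ`, and these are exactly the terms of the right-hand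
side that involve `vₜ`. What remains is, for each fixed `t`, an identity between the
`x`-derivatives of `v(·, t)` up to order four, checked by expanding `uₓ`, `uₓₓ` and `uₓₓₓ`.
-/

/-- Partial derivative in the first (space) variable. -/
noncomputable def dX (f : ℝ → ℝ → ℝ) (x t : ℝ) : ℝ := deriv (fun y => f y t) x

/-- Partial derivative in the second (time) variable. -/
noncomputable def dT (f : ℝ → ℝ → ℝ) (x t : ℝ) : ℝ := deriv (fun τ => f x τ) t

open Function

section PartialDerivatives

variable {f : ℝ → ℝ → ℝ}

theorem hasDerivAt_x_slice {x t : ℝ} (hf : DifferentiableAt ℝ (uncurry f) (x, t)) :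
    HasDerivAt (fun y => f y t) (fderiv ℝ (uncurry f) (x, t) (1, 0)) x :=
  (hf.hasFDerivAt.comp_hasDerivAt x ((hasDerivAt_id x).prodMk (hasDerivAt_const x t)) :)

theorem hasDerivAt_t_slice {x t : ℝ} (hf : DifferentiableAt ℝ (uncurry f) (x, t)) :
    HasDerivAt (fun τ => f x τ) (fderiv ℝ (uncurry f) (x, t) (0, 1)) t :=
  (hf.hasFDerivAt.comp_hasDerivAt t ((hasDerivAt_const t x).prodMk (hasDerivAt_id t)) :)

theorem uncurry_dX_eq_fderiv (hf : Differentiable ℝ (uncurry f)) :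
    uncurry (dX f) = fun p => fderiv ℝ (uncurry f) p (1, 0) :=
  funext fun p => (hasDerivAt_x_slice (hf p)).deriv

theorem uncurry_dT_eq_fderiv (hf : Differentiable ℝ (uncurry f)) :
    uncurry (dT f) = fun p => fderiv ℝ (uncurry f) p (0, 1) :=
  funext fun p => (hasDerivAt_t_slice (hf p)).deriv

variable {m n : WithTop ℕ∞}

theorem ContDiff.uncurry_dX (hf : ContDiff ℝ n (uncurry f)) (hmn : m + 1 ≤ n) :
    ContDiff ℝ m (uncurry (dX f)) := by
  rw [uncurry_dX_eq_fderiv (hf.differentiable (by rintro rfl; simp at hmn))]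
  exact (hf.fderiv_right hmn).clm_apply contDiff_const

theorem ContDiff.uncurry_dT (hf : ContDiff ℝ n (uncurry f)) (hmn : m + 1 ≤ n) :
    ContDiff ℝ m (uncurry (dT f)) := by
  rw [uncurry_dT_eq_fderiv (hf.differentiable (by rintro rfl; simp at hmn))]
  exact (hf.fderiv_right hmn).clm_apply contDiff_const

theorem dT_dX_comm (hf : ContDiff ℝ 2 (uncurry f)) (x t : ℝ) :
    dT (dX f) x t = dX (dT f) x t := by
  have hf' : Differentiable ℝ (fderiv ℝ (uncurry f)) :=
    (hf.fderiv_right (m := 1) le_rfl).differentiable one_ne_zero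
  have hfx := hf.uncurry_dX (m := 1) le_rfl
  have hft := hf.uncurry_dT (m := 1) le_rfl
  rw [dT, (hasDerivAt_t_slice (hfx.differentiable one_ne_zero (x, t))).deriv,
    dX, (hasDerivAt_x_slice (hft.differentiable one_ne_zero (x, t))).deriv,
    uncurry_dX_eq_fderiv (hf.differentiable two_ne_zero),
    uncurry_dT_eq_fderiv (hf.differentiable two_ne_zero),
    fderiv_clm_apply (hf' _) (differentiableAt_const _),
    fderiv_clm_apply (hf' _) (differentiableAt_const _)]
  simpa using hf.contDiffAt.isSymmSndFDerivAt (by simp) (0, 1) (1, 0)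

end PartialDerivatives

theorem dT_miura {v : ℝ → ℝ → ℝ} (hv : ContDiff ℝ 2 (uncurry v)) (x t : ℝ) :
    dT (fun y τ => dX v y τ - v y τ ^ 2) x t = dX (dT v) x t - 2 * v x t * dT v x t := by
  have hvx := hasDerivAt_t_slice ((hv.uncurry_dX le_rfl).differentiable one_ne_zero (x, t))
  have hv0 := hasDerivAt_t_slice (hv.differentiable two_ne_zero (x, t))
  rw [← dT_dX_comm hv]
  simp only [dT]
  rw [(hvx.fun_sub (hv0.fun_pow 2)).deriv, hvx.deriv, hv0.deriv]
  ring

/-- The Miura identity at a fixed time: `g = v(·, t)` and `h` stands for `vₜ(·, t)`. -/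
theorem miura_identity_slice {g h : ℝ → ℝ} (hg : ContDiff ℝ 4 g) {x : ℝ}
    (hh : DifferentiableAt ℝ h x) :
    deriv h x - 2 * g x * h x
        + 6 * (deriv g x - g x ^ 2) * deriv (fun y => deriv g y - g y ^ 2) x
        + deriv (deriv (deriv fun y => deriv g y - g y ^ 2)) x
      = deriv (fun y => h y - 6 * g y ^ 2 * deriv g y + deriv (deriv (deriv g)) y) x
        - 2 * g x * (h x - 6 * g x ^ 2 * deriv g x + deriv (deriv (deriv g)) x) := by
  have h1 : ContDiff ℝ 3 (deriv g) := hg.deriv'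
  have h2 : ContDiff ℝ 2 (deriv (deriv g)) := h1.deriv'
  have h3 : ContDiff ℝ 1 (deriv (deriv (deriv g))) := h2.deriv'
  have d0 y : HasDerivAt g (deriv g y) y := (hg.differentiable (by norm_num) y).hasDerivAt
  have d1 y : HasDerivAt (deriv g) (deriv (deriv g) y) y :=
    (h1.differentiable (by norm_num) y).hasDerivAt
  have d2 y : HasDerivAt (deriv (deriv g)) (deriv (deriv (deriv g)) y) y :=
    (h2.differentiable (by norm_num) y).hasDerivAt
  have d3 y : HasDerivAt (deriv (deriv (deriv g))) (deriv (deriv (deriv (deriv g))) y) y :=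
    (h3.differentiable (by norm_num) y).hasDerivAt
  have w1 : deriv (fun y => deriv g y - g y ^ 2)
      = fun y => deriv (deriv g) y - 2 * g y * deriv g y := by
    funext y
    rw [((d1 y).fun_sub ((d0 y).fun_pow 2)).deriv]
    ring
  have w2 : deriv (deriv (fun y => deriv g y - g y ^ 2))
      = fun y => deriv (deriv (deriv g)) y - 2 * deriv g y ^ 2 - 2 * g y * deriv (deriv g) y := by
    funext y
    rw [w1, ((d2 y).fun_sub (((d0 y).const_mul 2).fun_mul (d1 y))).deriv]
    ring
  have w3 : deriv (deriv (deriv (fun y => deriv g y - g y ^ 2))) x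
      = deriv (deriv (deriv (deriv g))) x - 6 * deriv g x * deriv (deriv g) x
        - 2 * g x * deriv (deriv (deriv g)) x := by
    rw [w2, (((d3 x).fun_sub (((d1 x).fun_pow 2).const_mul 2)).fun_sub
      (((d0 x).const_mul 2).fun_mul (d2 x))).deriv]
    ring
  rw [w3, w1, ((hh.hasDerivAt.fun_sub ((((d0 x).fun_pow 2).const_mul 6).fun_mul (d1 x))).fun_add
    (d3 x)).deriv]
  ring

theorem kdv_eq_miura_mkdv {v u : ℝ → ℝ → ℝ} (hv : ContDiff ℝ 4 (uncurry v))
    (hu : ∀ x t, u x t = dX v x t - v x t ^ 2) (x t : ℝ) :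
    dT u x t + 6 * u x t * dX u x t + dX (fun y τ => dX (fun a b => dX u a b) y τ) x t
      = dX (fun y τ => dT v y τ - 6 * (v y τ) ^ 2 * dX v y τ
            + dX (fun a b => dX (fun e f => dX v e f) a b) y τ) x t
        - 2 * v x t * (dT v x t - 6 * (v x t) ^ 2 * dX v x t
            + dX (fun a b => dX (fun e f => dX v e f) a b) x t) := by
  obtain rfl : u = fun y τ => dX v y τ - v y τ ^ 2 := funext₂ hu
  have hv2 : ContDiff ℝ 2 (uncurry v) := hv.of_le (by norm_num)
  have hvt := hasDerivAt_x_slice ((hv2.uncurry_dT le_rfl).differentiable one_ne_zero (x, t))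
  rw [dT_miura hv2]
  exact miura_identity_slice (hv.comp (contDiff_id.prodMk contDiff_const)) hvt.differentiableAt

/-- **Miura transformation.** For smooth `v(x,t)` and
`u = ∂ₓv - v²`, the KdV expression factors through the mKdV expression:
`uₜ + 6uuₓ + uₓₓₓ = (vₜ - 6v²vₓ + vₓₓₓ)ₓ - 2v (vₜ - 6v²vₓ + vₓₓₓ)`.
In particular, if `v` solves mKdV (`vₜ - 6v²vₓ + vₓₓₓ = 0`) then
`u = vₓ - v²` solves KdV (`uₜ + 6uuₓ + uₓₓₓ = 0`). -/
theorem miura_transformation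
    (v u : ℝ → ℝ → ℝ)
    (hv : ContDiff ℝ (⊤:ℕ∞) (fun p : ℝ × ℝ => v p.1 p.2))
    (hu : ∀ x t, u x t = dX v x t - (v x t) ^ 2) :
    (∀ x t, dT u x t + 6 * u x t * dX u x t + dX (fun y τ => dX (fun a b => dX u a b) y τ) x t
      = dX (fun y τ => dT v y τ - 6 * (v y τ) ^ 2 * dX v y τ
            + dX (fun a b => dX (fun e f => dX v e f) a b) y τ) x t
        - 2 * v x t * (dT v x t - 6 * (v x t) ^ 2 * dX v x t
            + dX (fun a b => dX (fun e f => dX v e f) a b) x t)) ∧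
    ((∀ x t, dT v x t - 6 * (v x t) ^ 2 * dX v x t
        + dX (fun a b => dX (fun e f => dX v e f) a b) x t = 0) →
      ∀ x t, dT u x t + 6 * u x t * dX u x t
        + dX (fun y τ => dX (fun a b => dX u a b) y τ) x t = 0) := by
  have kdv_eq := kdv_eq_miura_mkdv (hv.of_le (by norm_cast)) hu
  refine ⟨kdv_eq, fun mkdv x t => ?_⟩
  rw [kdv_eq, mkdv, funext₂ mkdv]
  simp [dX]
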